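/- arXiv:2101.01086 — 2 statements merged into one kernel-verified Lean document; each statement's English description precedes it below -/
import Mathlib

section
/- For the Greedy algorithm run on K arms with 1-subgaussian rewards and mean rewards in [0,1], for every ε > 0 and every horizon T ∈ ℕ, the regret satisfies R_T ≤ T·exp(−N_ε·ε²/2) + 3εT + 6K/ε + Σ_{k=1}^K Δ_k, where N_ε is the number of ε-optimal arms. -/
open MeasureTheory ProbabilityTheory Real

/-- Lowest-index maximizer of `f` over `Fin K` (ties broken by lowest index). -/
noncomputable def argmaxLow {K : ℕ} (hK : 0 < K) (f : Fin K → ℝ) : Fin K :=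
  (Finset.univ.filter fun k => ∀ j, f j ≤ f k).min' (by
    obtain ⟨b, -, hb⟩ := Finset.exists_max_image (Finset.univ : Finset (Fin K)) f
      ⟨⟨0, hK⟩, Finset.mem_univ _⟩
    exact ⟨b, Finset.mem_filter.2 ⟨Finset.mem_univ _, fun j => hb j (Finset.mem_univ _)⟩⟩)

/-- Empirical mean of arm `k` given the list `hist` of arms pulled at rounds
`0, 1, …, hist.length - 1`, mean rewards `μ` and realized noise sequence `ω`:
the reward at a round `s` with `hist[s] = k` is `μ k + ω s`. -/
noncomputable def empMean {K : ℕ} (μ : Fin K → ℝ) (ω : ℕ → ℝ) (hist : List (Fin K))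
    (k : Fin K) : ℝ :=
  (∑ s ∈ Finset.range hist.length, if hist[s]? = some k then μ k + ω s else 0) / hist.count k

/-- The next arm pulled by Greedy given the history of pulls: each arm once during the
first `K` rounds, afterwards an arm with maximal empirical mean (lowest index first). -/
noncomputable def greedyNext {K : ℕ} (hK : 0 < K) (μ : Fin K → ℝ) (ω : ℕ → ℝ)
    (hist : List (Fin K)) : Fin K :=
  if h : hist.length < K then ⟨hist.length, h⟩
  else argmaxLow hK (empMean μ ω hist)

/-- History of the arms pulled by Greedy during the first `t` rounds. -/
noncomputable def greedyHist {K : ℕ} (hK : 0 < K) (μ : Fin K → ℝ) (ω : ℕ → ℝ) :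
    ℕ → List (Fin K)
  | 0 => []
  | t + 1 => greedyHist hK μ ω t ++ [greedyNext hK μ ω (greedyHist hK μ ω t)]

/-- The arm pulled by Greedy at round `t` (rounds are 0-indexed). -/
noncomputable def greedyArm {K : ℕ} (hK : 0 < K) (μ : Fin K → ℝ) (ω : ℕ → ℝ) (t : ℕ) : Fin K :=
  greedyNext hK μ ω (greedyHist hK μ ω t)

/-- Best mean reward `μ* = max_k μ_k`. -/
noncomputable def muStar {K : ℕ} (hK : 0 < K) (μ : Fin K → ℝ) : ℝ :=
  Finset.univ.sup' ⟨⟨0, hK⟩, Finset.mem_univ _⟩ μ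

/-- Number of `ε`-optimal arms, i.e. arms `k` with `Δ_k = μ* - μ_k ≤ ε`. -/
noncomputable def nOpt {K : ℕ} (hK : 0 < K) (μ : Fin K → ℝ) (ε : ℝ) : ℕ :=
  (Finset.univ.filter fun k => muStar hK μ - μ k ≤ ε).card

/-- Regret of Greedy over horizon `T`:
`R_T = T·μ* - E[∑_{t=1}^T μ_{A_t}] (= ∑_k Δ_k·E[N_k(T)])`. -/
noncomputable def greedyRegret {Ω : Type*} [MeasurableSpace Ω] (P : Measure Ω)
    {K : ℕ} (hK : 0 < K) (μ : Fin K → ℝ) (η : ℕ → Ω → ℝ) (T : ℕ) : ℝ :=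
  (T : ℝ) * muStar hK μ - ∫ ω, ∑ t ∈ Finset.range T, μ (greedyArm hK μ (fun s => η s ω) t) ∂P


/-!
All quantities are functions of the noise path `w = (η_s)_s`, and Greedy's choice at round `t`
depends only on `w_s` for `s < t`. Split on the event `B` that every `ε`-optimal arm `j` sees
its noise sum fall below `-N_j ε` at some round before `T`. On `B` the regret is at most `T`.
Following each optimal arm until it falls, the stopped exponential supermartingale
`exp (∑ (λ η_s - λ²/2))` with `λ = -ε` exceeds `exp (N_ε ε²/2)` on `B`, so
`P(B) ≤ exp (-N_ε ε²/2)`.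

Off `B` some optimal arm keeps an empirical mean `≥ μ* - 2ε`, so after the first `K` rounds
Greedy pulls an arm `k` with count `n ≥ 1` only if its noise sum has reached `n (Δ_k - 2ε)`.
The same supermartingale with `λ = Δ_k - 2ε` bounds the probability of this by
`exp (-n (Δ_k - 2ε)²/2)`. For `Δ_k > 3ε` the geometric sum gives
`Δ_k · 2/(Δ_k - 2ε)² ≤ 6/ε`; the arms with `Δ_k ≤ 3ε` cost at most `3εT`, and the first pulls
at most `∑ Δ_k`.
-/

open Finset

theorem ProbabilityTheory.iIndepFun.indepFun_of_dependsOn_Iio {Ω β : Type*}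
    [MeasurableSpace Ω] [MeasurableSpace β] {P : Measure Ω} {η : ℕ → Ω → ℝ}
    (hmeas : ∀ t, Measurable (η t)) (hindep : iIndepFun η P) {f : (ℕ → ℝ) → β}
    (hf : Measurable f) {t : ℕ} (hdep : DependsOn f (Set.Iio t)) :
    IndepFun (fun ω => f fun s => η s ω) (η t) P := by
  let g : (range t → ℝ) → β := fun x => f fun s => if h : s ∈ range t then x ⟨s, h⟩ else 0
  have hg : Measurable g := hf.comp <| measurable_pi_lambda _ fun s => by
    by_cases h : s ∈ range t <;> simp only [h, dite_true, dite_false] <;> fun_prop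
  have hfg : (fun ω => f fun s => η s ω) = g ∘ fun ω (i : range t) => η i ω := by
    funext ω
    exact hdep fun s hs => by simp [mem_range.2 hs]
  rw [hfg]
  exact (hindep.indepFun_finset (range t) {t} (by simp) hmeas).comp hg
    (measurable_pi_apply ⟨t, mem_singleton_self t⟩)

noncomputable def compensatedSum (C : ℕ → Set (ℕ → ℝ)) (l : ℝ) (t : ℕ) (w : ℕ → ℝ) : ℝ :=
  ∑ s ∈ range t, (C s).indicator (fun w => l * w s - l ^ 2 / 2) w

section CompensatedSum

variable {C : ℕ → Set (ℕ → ℝ)} {l : ℝ}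

lemma compensatedSum_succ (t : ℕ) (w : ℕ → ℝ) :
    compensatedSum C l (t + 1) w =
      compensatedSum C l t w + (C t).indicator (fun w => l * w t - l ^ 2 / 2) w :=
  sum_range_succ _ _

lemma measurable_compensatedSum (hC : ∀ s, MeasurableSet (C s)) (t : ℕ) :
    Measurable (compensatedSum C l t) :=
  Finset.measurable_sum _ fun s _ =>
    (by fun_prop : Measurable fun w : ℕ → ℝ => l * w s - l ^ 2 / 2).indicator (hC s)

lemma dependsOn_compensatedSum (hC : ∀ s, DependsOn (· ∈ C s) (Set.Iio s)) (t : ℕ) :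
    DependsOn (compensatedSum C l t) (Set.Iio t) := by
  intro w w' h
  refine sum_congr rfl fun s hs => ?_
  have hst : s < t := mem_range.1 hs
  have hmem : (w ∈ C s) = (w' ∈ C s) := hC s fun u hu => h u (lt_trans hu hst)
  by_cases hw : w ∈ C s
  · rw [Set.indicator_of_mem hw, Set.indicator_of_mem (hmem ▸ hw), h s hst]
  · rw [Set.indicator_of_notMem hw, Set.indicator_of_notMem (hmem ▸ hw)]

lemma exp_compensatedSum_succ (t : ℕ) (w : ℕ → ℝ) :
    exp (compensatedSum C l (t + 1) w) = exp (compensatedSum C l t w) +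
      (C t).indicator (fun w => exp (compensatedSum C l t w)) w *
        (exp (l * w t - l ^ 2 / 2) - 1) := by
  by_cases hw : w ∈ C t
  · rw [compensatedSum_succ, Set.indicator_of_mem hw, Set.indicator_of_mem hw, exp_add]
    ring
  · rw [compensatedSum_succ, Set.indicator_of_notMem hw, Set.indicator_of_notMem hw]
    simp

end CompensatedSum

section ExpSupermartingale

variable {Ω : Type*} [MeasurableSpace Ω] {P : Measure Ω} {l : ℝ}

lemma integrable_exp_mul_sub_sq_half_sub_one [IsProbabilityMeasure P] {X : Ω → ℝ}
    (hX : Integrable (fun ω => exp (l * X ω)) P) :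
    Integrable (fun ω => exp (l * X ω - l ^ 2 / 2) - 1) P := by
  simp_rw [exp_sub]
  exact (hX.div_const _).sub (integrable_const 1)

lemma integral_exp_mul_sub_sq_half_sub_one_nonpos [IsProbabilityMeasure P] {X : Ω → ℝ}
    (hX : Integrable (fun ω => exp (l * X ω)) P)
    (hmgf : ∫ ω, exp (l * X ω) ∂P ≤ exp (l ^ 2 / 2)) :
    ∫ ω, (exp (l * X ω - l ^ 2 / 2) - 1) ∂P ≤ 0 := by
  simp_rw [exp_sub]
  rw [integral_sub (hX.div_const _) (integrable_const 1), integral_div, integral_const]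
  simpa [div_le_one (exp_pos _)] using hmgf

variable {C : ℕ → Set (ℕ → ℝ)} {η : ℕ → Ω → ℝ}

lemma indepFun_indicator_exp_compensatedSum (hmeas : ∀ t, Measurable (η t))
    (hindep : iIndepFun η P) (hCm : ∀ s, MeasurableSet (C s))
    (hCd : ∀ s, DependsOn (· ∈ C s) (Set.Iio s)) (t : ℕ) :
    IndepFun (fun ω => (C t).indicator (fun w => exp (compensatedSum C l t w)) fun s => η s ω)
      (fun ω => exp (l * η t ω - l ^ 2 / 2) - 1) P := by
  refine (hindep.indepFun_of_dependsOn_Iio hmeas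
    ((measurable_compensatedSum hCm t).exp.indicator (hCm t)) ?_).comp measurable_id
    (by fun_prop : Measurable fun x : ℝ => exp (l * x - l ^ 2 / 2) - 1)
  intro w w' h
  have hmem : (w ∈ C t) = (w' ∈ C t) := hCd t h
  by_cases hw : w ∈ C t
  · rw [Set.indicator_of_mem hw, Set.indicator_of_mem (hmem ▸ hw),
      dependsOn_compensatedSum hCd t h]
  · rw [Set.indicator_of_notMem hw, Set.indicator_of_notMem (hmem ▸ hw)]

lemma integrable_indicator_exp_compensatedSum (hmeas : ∀ t, Measurable (η t))
    (hCm : ∀ s, MeasurableSet (C s)) {t : ℕ}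
    (ht : Integrable (fun ω => exp (compensatedSum C l t fun s => η s ω)) P) :
    Integrable (fun ω => (C t).indicator (fun w => exp (compensatedSum C l t w))
      fun s => η s ω) P :=
  (ht.indicator (measurable_pi_lambda _ hmeas (hCm t))).congr (ae_of_all _ fun _ => rfl)

lemma integrable_exp_compensatedSum [IsProbabilityMeasure P] (hmeas : ∀ t, Measurable (η t))
    (hindep : iIndepFun η P) (hCm : ∀ s, MeasurableSet (C s))
    (hCd : ∀ s, DependsOn (· ∈ C s) (Set.Iio s))
    (hint : ∀ t, Integrable (fun ω => exp (l * η t ω)) P) (t : ℕ) :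
    Integrable (fun ω => exp (compensatedSum C l t fun s => η s ω)) P := by
  induction t with
  | zero => simp [compensatedSum]
  | succ t ih =>
    simp_rw [exp_compensatedSum_succ]
    exact ih.add ((indepFun_indicator_exp_compensatedSum hmeas hindep hCm hCd t).integrable_mul
      (integrable_indicator_exp_compensatedSum hmeas hCm ih)
      (integrable_exp_mul_sub_sq_half_sub_one (hint t)))

theorem integral_exp_compensatedSum_le_one [IsProbabilityMeasure P]
    (hmeas : ∀ t, Measurable (η t)) (hindep : iIndepFun η P) (hCm : ∀ s, MeasurableSet (C s))
    (hCd : ∀ s, DependsOn (· ∈ C s) (Set.Iio s))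
    (hint : ∀ t, Integrable (fun ω => exp (l * η t ω)) P)
    (hmgf : ∀ t, ∫ ω, exp (l * η t ω) ∂P ≤ exp (l ^ 2 / 2)) (t : ℕ) :
    ∫ ω, exp (compensatedSum C l t fun s => η s ω) ∂P ≤ 1 := by
  induction t with
  | zero => simp [compensatedSum]
  | succ t ih =>
    have hEt := integrable_exp_compensatedSum hmeas hindep hCm hCd hint t
    have hH := integrable_indicator_exp_compensatedSum hmeas hCm hEt
    have hY := integrable_exp_mul_sub_sq_half_sub_one (hint t)
    have hHY := indepFun_indicator_exp_compensatedSum hmeas hindep hCm hCd (l := l) t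
    have hH_nonneg : 0 ≤ ∫ ω, (C t).indicator (fun w => exp (compensatedSum C l t w))
        (fun s => η s ω) ∂P :=
      integral_nonneg fun ω => Set.indicator_nonneg (fun _ _ => (exp_pos _).le) _
    have hY_nonpos := integral_exp_mul_sub_sq_half_sub_one_nonpos (hint t) (hmgf t)
    have hprod := hHY.integral_mul_eq_mul_integral hH.aestronglyMeasurable hY.aestronglyMeasurable
    simp only [Pi.mul_apply] at hprod
    -- the new factor `exp (l η_t - l²/2) - 1` is independent of the past and has mean `≤ 0`
    simp_rw [exp_compensatedSum_succ]
    rw [integral_add hEt (by exact hHY.integrable_mul hH hY), hprod]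
    nlinarith

theorem measureReal_le_exp_neg_of_le_compensatedSum [IsProbabilityMeasure P]
    (hmeas : ∀ t, Measurable (η t)) (hindep : iIndepFun η P) (hCm : ∀ s, MeasurableSet (C s))
    (hCd : ∀ s, DependsOn (· ∈ C s) (Set.Iio s))
    (hint : ∀ t, Integrable (fun ω => exp (l * η t ω)) P)
    (hmgf : ∀ t, ∫ ω, exp (l * η t ω) ∂P ≤ exp (l ^ 2 / 2))
    {T : ℕ} {E : Set (ℕ → ℝ)} {a : ℝ}
    (hE : ∀ w ∈ E, a ≤ compensatedSum C l T w) :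
    P.real ((fun ω s => η s ω) ⁻¹' E) ≤ exp (-a) := by
  have hmarkov := mul_meas_ge_le_integral_of_nonneg (ae_of_all _ fun ω => (exp_pos _).le)
    (integrable_exp_compensatedSum hmeas hindep hCm hCd hint T) (exp a)
  have hsub : P.real ((fun ω s => η s ω) ⁻¹' E) ≤
      P.real {ω | exp a ≤ exp (compensatedSum C l T fun s => η s ω)} :=
    measureReal_mono fun ω hω => exp_le_exp.2 (hE _ hω)
  calc P.real ((fun ω s => η s ω) ⁻¹' E)
      ≤ exp (-a) *
          (exp a * P.real {ω | exp a ≤ exp (compensatedSum C l T fun s => η s ω)}) := by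
        rwa [← mul_assoc, ← exp_add, neg_add_cancel, exp_zero, one_mul]
    _ ≤ exp (-a) * 1 := by
        gcongr
        exact hmarkov.trans
          (integral_exp_compensatedSum_le_one hmeas hindep hCm hCd hint hmgf T)
    _ = exp (-a) := mul_one _

end ExpSupermartingale

lemma sum_Ico_exp_neg_pow_le {x : ℝ} (hx : 0 < x) (T : ℕ) :
    ∑ n ∈ Ico 1 T, exp (-x) ^ n ≤ 1 / x := by
  have hr : exp (-x) < 1 := exp_lt_one_iff.2 (neg_lt_zero.2 hx)
  refine (geom_sum_Ico_le_of_lt_one (exp_pos _).le hr).trans ?_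
  rw [pow_one, div_le_div_iff₀ (sub_pos.2 hr) hx]
  have hinv : exp (-x) * exp x = 1 := by rw [← exp_add, neg_add_cancel, exp_zero]
  nlinarith [add_one_le_exp x, exp_pos (-x)]

lemma gap_mul_sum_exp_neg_pow_le {ε Δ : ℝ} (hε : 0 < ε) (hΔ : 3 * ε < Δ) (T : ℕ) :
    Δ * ∑ n ∈ Ico 1 T, exp (-((Δ - 2 * ε) ^ 2 / 2)) ^ n ≤ 6 / ε := by
  have hx : 0 < (Δ - 2 * ε) ^ 2 / 2 := by nlinarith
  calc Δ * ∑ n ∈ Ico 1 T, exp (-((Δ - 2 * ε) ^ 2 / 2)) ^ n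
      ≤ Δ * (1 / ((Δ - 2 * ε) ^ 2 / 2)) :=
        mul_le_mul_of_nonneg_left (sum_Ico_exp_neg_pow_le hx T) (by linarith)
    _ ≤ 6 / ε := by
        rw [mul_one_div, div_le_div_iff₀ hx hε]
        nlinarith

section ArgmaxLow

variable {K : ℕ} (hK : 0 < K)

lemma le_argmaxLow (f : Fin K → ℝ) (j : Fin K) : f j ≤ f (argmaxLow hK f) :=
  (mem_filter.1 (min'_mem (univ.filter fun k => ∀ j, f j ≤ f k) _)).2 j

lemma argmaxLow_eq_iff (f : Fin K → ℝ) (a : Fin K) :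
    argmaxLow hK f = a ↔ (∀ j, f j ≤ f a) ∧ ∀ b, (∀ j, f j ≤ f b) → a ≤ b := by
  constructor
  · rintro rfl
    exact ⟨le_argmaxLow hK f, fun b hb => min'_le _ _ (mem_filter.2 ⟨mem_univ b, hb⟩)⟩
  · rintro ⟨hmax, hlow⟩
    exact le_antisymm (min'_le _ _ (mem_filter.2 ⟨mem_univ a, hmax⟩))
      (hlow _ (le_argmaxLow hK f))

lemma measurable_argmaxLow {α : Type*} [MeasurableSpace α] {f : α → Fin K → ℝ}
    (hf : ∀ k, Measurable fun x => f x k) : Measurable fun x => argmaxLow hK (f x) := by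
  refine measurable_to_countable' fun a => ?_
  simp only [Set.preimage, Set.mem_singleton_iff, argmaxLow_eq_iff]
  exact measurableSet_setOfPred.2 (by fun_prop)

end ArgmaxLow

section GreedyPath

variable {K : ℕ} (hK : 0 < K) (μ : Fin K → ℝ)

noncomputable def pullCount (w : ℕ → ℝ) (k : Fin K) (t : ℕ) : ℕ :=
  #{s ∈ range t | greedyArm hK μ w s = k}

noncomputable def noiseSum (w : ℕ → ℝ) (k : Fin K) (t : ℕ) : ℝ :=
  ∑ s ∈ range t, if greedyArm hK μ w s = k then w s else 0

variable {hK μ} {w : ℕ → ℝ}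

lemma greedyHist_eq_map (t : ℕ) :
    greedyHist hK μ w t = (List.range t).map (greedyArm hK μ w) := by
  induction t with
  | zero => rfl
  | succ t ih =>
    rw [greedyHist, List.range_succ, List.map_append, List.map_singleton, ← ih]
    rfl

lemma length_greedyHist (t : ℕ) : (greedyHist hK μ w t).length = t := by
  simp [greedyHist_eq_map]

lemma greedyArm_of_lt {t : ℕ} (ht : t < K) : greedyArm hK μ w t = ⟨t, ht⟩ := by
  simp [greedyArm, greedyNext, length_greedyHist, ht]

lemma natCast_pullCount (k : Fin K) (t : ℕ) :
    (pullCount hK μ w k t : ℝ) =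
      ∑ s ∈ range t, if greedyArm hK μ w s = k then 1 else 0 := by
  rw [pullCount, natCast_card_filter]

lemma pullCount_succ (k : Fin K) (t : ℕ) :
    pullCount hK μ w k (t + 1) =
      pullCount hK μ w k t + if greedyArm hK μ w t = k then 1 else 0 := by
  simp only [pullCount, range_add_one, filter_insert]
  split_ifs with h
  · exact card_insert_of_notMem (by simp)
  · rfl

lemma pullCount_pos {t : ℕ} (ht : K ≤ t) (k : Fin K) : 0 < pullCount hK μ w k t :=
  card_pos.2 ⟨k, mem_filter.2 ⟨mem_range.2 (k.isLt.trans_le ht), greedyArm_of_lt k.isLt⟩⟩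

lemma count_greedyHist (k : Fin K) (t : ℕ) :
    (greedyHist hK μ w t).count k = pullCount hK μ w k t := by
  induction t with
  | zero => rfl
  | succ t ih =>
    rw [greedyHist, List.count_append, ih, pullCount_succ, List.count_singleton]
    simp only [beq_iff_eq]
    congr

lemma empMean_greedyHist (k : Fin K) (t : ℕ) :
    empMean μ w (greedyHist hK μ w t) k =
      (pullCount hK μ w k t * μ k + noiseSum hK μ w k t) / pullCount hK μ w k t := by
  rw [empMean, count_greedyHist, length_greedyHist, natCast_pullCount, noiseSum, sum_mul,
    ← sum_add_distrib]
  congr 1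
  refine sum_congr rfl fun s hs => ?_
  rw [greedyHist_eq_map, List.getElem?_map, List.getElem?_range (mem_range.1 hs)]
  split_ifs <;> simp_all

lemma greedyArm_of_le {t : ℕ} (ht : K ≤ t) :
    greedyArm hK μ w t =
      argmaxLow hK fun k => μ k + noiseSum hK μ w k t / pullCount hK μ w k t := by
  rw [greedyArm, greedyNext, dif_neg (by rw [length_greedyHist]; omega)]
  congr 1
  funext k
  have hN : (pullCount hK μ w k t : ℝ) ≠ 0 := (Nat.cast_pos.2 (pullCount_pos ht k)).ne'
  rw [empMean_greedyHist, add_div, mul_div_cancel_left₀ _ hN]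

lemma le_greedyArm {t : ℕ} (ht : K ≤ t) (j : Fin K) :
    μ j + noiseSum hK μ w j t / pullCount hK μ w j t ≤
      μ (greedyArm hK μ w t) +
        noiseSum hK μ w (greedyArm hK μ w t) t / pullCount hK μ w (greedyArm hK μ w t) t := by
  rw [greedyArm_of_le ht]
  exact le_argmaxLow hK (fun k => μ k + noiseSum hK μ w k t / pullCount hK μ w k t) j

end GreedyPath

section Predictable

variable {K : ℕ} {hK : 0 < K} {μ : Fin K → ℝ}

lemma measurable_pullCount_of_forall_lt {t : ℕ}
    (ht : ∀ s < t, Measurable fun w => greedyArm hK μ w s) (k : Fin K) :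
    Measurable fun w => pullCount hK μ w k t := by
  simp_rw [pullCount, card_filter]
  exact Finset.measurable_sum _ fun s hs =>
    Measurable.ite ((ht s (mem_range.1 hs)) (measurableSet_singleton k)) measurable_const
      measurable_const

lemma measurable_noiseSum_of_forall_lt {t : ℕ}
    (ht : ∀ s < t, Measurable fun w => greedyArm hK μ w s) (k : Fin K) :
    Measurable fun w => noiseSum hK μ w k t :=
  Finset.measurable_sum _ fun s hs =>
    Measurable.ite ((ht s (mem_range.1 hs)) (measurableSet_singleton k)) (measurable_pi_apply s)
      measurable_const

@[fun_prop]
theorem measurable_greedyArm (t : ℕ) : Measurable fun w => greedyArm hK μ w t := by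
  induction t using Nat.strong_induction_on with
  | _ t ih =>
    rcases lt_or_ge t K with ht | ht
    · simp only [greedyArm_of_lt ht]
      exact measurable_const
    · simp only [greedyArm_of_le ht]
      have hN := measurable_pullCount_of_forall_lt ih
      have hS := measurable_noiseSum_of_forall_lt ih
      exact measurable_argmaxLow hK fun k => by fun_prop

@[fun_prop]
lemma measurable_pullCount (k : Fin K) (t : ℕ) : Measurable fun w => pullCount hK μ w k t :=
  measurable_pullCount_of_forall_lt (fun s _ => measurable_greedyArm s) k

@[fun_prop]
lemma measurable_noiseSum (k : Fin K) (t : ℕ) : Measurable fun w => noiseSum hK μ w k t :=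
  measurable_noiseSum_of_forall_lt (fun s _ => measurable_greedyArm s) k

lemma pullCount_congr {w w' : ℕ → ℝ} {t : ℕ}
    (h : ∀ s < t, greedyArm hK μ w s = greedyArm hK μ w' s) (k : Fin K) :
    pullCount hK μ w k t = pullCount hK μ w' k t := by
  unfold pullCount
  congr 1
  exact filter_congr fun s hs => by rw [h s (mem_range.1 hs)]

lemma noiseSum_congr {w w' : ℕ → ℝ} {t : ℕ}
    (h : ∀ s < t, greedyArm hK μ w s = greedyArm hK μ w' s) (hw : ∀ s < t, w s = w' s)
    (k : Fin K) : noiseSum hK μ w k t = noiseSum hK μ w' k t :=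
  sum_congr rfl fun s hs => by rw [h s (mem_range.1 hs), hw s (mem_range.1 hs)]

theorem dependsOn_greedyArm (t : ℕ) : DependsOn (fun w => greedyArm hK μ w t) (Set.Iio t) := by
  induction t using Nat.strong_induction_on with
  | _ t ih =>
    intro w w' hw
    have harms : ∀ s < t, greedyArm hK μ w s = greedyArm hK μ w' s :=
      fun s hs => ih s hs fun u hu => hw u (lt_trans hu hs)
    rcases lt_or_ge t K with ht | ht
    · simp only [greedyArm_of_lt ht]
    · simp only [greedyArm_of_le ht, pullCount_congr harms, noiseSum_congr harms hw]

lemma dependsOn_pullCount (k : Fin K) (t : ℕ) :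
    DependsOn (fun w => pullCount hK μ w k t) (Set.Iio t) := fun _ _ hw =>
  pullCount_congr (fun s hs => dependsOn_greedyArm s fun u hu => hw u (lt_trans hu hs)) k

lemma dependsOn_noiseSum (k : Fin K) (t : ℕ) :
    DependsOn (fun w => noiseSum hK μ w k t) (Set.Iio t) := fun _ _ hw =>
  noiseSum_congr (fun s hs => dependsOn_greedyArm s fun u hu => hw u (lt_trans hu hs)) hw k

end Predictable

section Counting

variable {K : ℕ} {hK : 0 < K} {μ : Fin K → ℝ} {w : ℕ → ℝ}

lemma pullCount_le (k : Fin K) (t : ℕ) : pullCount hK μ w k t ≤ t :=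
  (card_filter_le _ _).trans (card_range t).le

lemma pullCount_greedyArm_of_lt {t : ℕ} (ht : t < K) :
    pullCount hK μ w (greedyArm hK μ w t) t = 0 := by
  refine card_eq_zero.2 (filter_eq_empty_iff.2 fun s hs => ?_)
  have hs : s < t := mem_range.1 hs
  rw [greedyArm_of_lt ht, greedyArm_of_lt (hs.trans ht), Fin.mk.injEq]
  exact hs.ne

lemma exists_pullCount_eq {k : Fin K} {T n : ℕ} (hn : n < pullCount hK μ w k T) :
    ∃ t < T, greedyArm hK μ w t = k ∧ pullCount hK μ w k t = n := by
  induction T with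
  | zero => simp [pullCount] at hn
  | succ T ih =>
    rw [pullCount_succ] at hn
    by_cases hlt : n < pullCount hK μ w k T
    · obtain ⟨t, htT, ht⟩ := ih hlt
      exact ⟨t, htT.trans (Nat.lt_succ_self T), ht⟩
    · split_ifs at hn with hT
      · exact ⟨T, Nat.lt_succ_self T, hT, by omega⟩
      · omega

/-- The counts `1, …, N_k(T) - 1` are each attained at a distinct pull of `k` after the initial
round robin. -/
lemma pullCount_le_one_add_sum_indicator (k : Fin K) (T : ℕ) (E : ℕ → Set (ℕ → ℝ))
    (hE : ∀ t < T, K ≤ t → greedyArm hK μ w t = k → w ∈ E (pullCount hK μ w k t)) :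
    (pullCount hK μ w k T : ℝ) ≤ 1 + ∑ n ∈ Ico 1 T, (E n).indicator 1 w := by
  classical
  have hsub : Ico 1 (pullCount hK μ w k T) ⊆ {n ∈ Ico 1 T | w ∈ E n} := by
    intro n hn
    obtain ⟨hn1, hnN⟩ := mem_Ico.1 hn
    obtain ⟨t, htT, hk, hcount⟩ := exists_pullCount_eq hnN
    have hKt : K ≤ t := by
      by_contra! htK
      rw [← hk, pullCount_greedyArm_of_lt htK] at hcount
      omega
    refine mem_filter.2 ⟨mem_Ico.2 ⟨hn1, hnN.trans_le (pullCount_le k T)⟩, ?_⟩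
    exact hcount ▸ hE t htT hKt hk
  have hcard := card_le_card hsub
  rw [Nat.card_Ico] at hcard
  simp only [Set.indicator_apply, Pi.one_apply, sum_boole]
  norm_cast
  omega

lemma sum_comp_greedyArm (g : Fin K → ℝ) (T : ℕ) :
    ∑ t ∈ range T, g (greedyArm hK μ w t) = ∑ k, g k * pullCount hK μ w k T := by
  rw [← sum_fiberwise_of_maps_to (fun t _ => mem_univ (greedyArm hK μ w t))]
  refine sum_congr rfl fun k _ => ?_
  rw [sum_congr rfl fun t ht => by rw [(mem_filter.1 ht).2], sum_const, nsmul_eq_mul, mul_comm]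
  rfl

lemma sum_pullCount (T : ℕ) : ∑ k, (pullCount hK μ w k T : ℝ) = T := by
  simpa using (sum_comp_greedyArm (hK := hK) (μ := μ) (w := w) (fun _ => 1) T).symm

lemma noiseSum_eq_zero_of_pullCount_eq_zero {k : Fin K} {t : ℕ}
    (h : pullCount hK μ w k t = 0) : noiseSum hK μ w k t = 0 := by
  refine sum_eq_zero fun s hs => if_neg fun hk => ?_
  exact notMem_empty s (card_eq_zero.1 h ▸ mem_filter.2 ⟨hs, hk⟩)

end Counting

section StoppedSums

variable {K : ℕ} (hK : 0 < K) (μ : Fin K → ℝ)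

/-- The rounds counted when each arm `j ∈ G` is followed until it first enters `halt j u`. -/
def activeSet (G : Finset (Fin K)) (halt : Fin K → ℕ → Set (ℕ → ℝ)) (s : ℕ) :
    Set (ℕ → ℝ) :=
  {w | greedyArm hK μ w s ∈ G ∧ ∀ u ≤ s, w ∉ halt (greedyArm hK μ w s) u}

variable {hK μ} {G : Finset (Fin K)} {halt : Fin K → ℕ → Set (ℕ → ℝ)}

lemma measurableSet_activeSet (hhalt : ∀ j u, MeasurableSet (halt j u)) (s : ℕ) :
    MeasurableSet (activeSet hK μ G halt s) := by
  have heq : activeSet hK μ G halt s =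
      {w | ∃ j, greedyArm hK μ w s = j ∧ j ∈ G ∧ ∀ u ≤ s, w ∉ halt j u} := by
    ext w
    simp [activeSet]
  rw [heq]
  exact measurableSet_setOfPred.2 (by fun_prop (disch := exact hhalt _ _))

lemma dependsOn_activeSet (hhalt : ∀ j u, DependsOn (· ∈ halt j u) (Set.Iio u)) (s : ℕ) :
    DependsOn (· ∈ activeSet hK μ G halt s) (Set.Iio s) := by
  intro w w' hw
  have harm : greedyArm hK μ w s = greedyArm hK μ w' s := dependsOn_greedyArm s hw
  have hhalt_iff : ∀ u ≤ s,
      (w ∈ halt (greedyArm hK μ w s) u) = (w' ∈ halt (greedyArm hK μ w s) u) := fun u hu =>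
    hhalt _ u fun v hv => hw v (lt_of_lt_of_le hv hu)
  simp only [activeSet, Set.mem_ofPred_eq, ← harm]
  exact propext (and_congr_right fun _ => forall₂_congr fun u hu => by rw [hhalt_iff u hu])

variable {l : ℝ} {w : ℕ → ℝ}

lemma sum_range_ite_greedyArm_eq (j : Fin K) (t : ℕ) :
    ∑ s ∈ range t, (if greedyArm hK μ w s = j then l * w s - l ^ 2 / 2 else 0) =
      l * noiseSum hK μ w j t - l ^ 2 / 2 * pullCount hK μ w j t := by
  rw [noiseSum, natCast_pullCount, mul_sum, mul_sum, ← sum_sub_distrib]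
  refine sum_congr rfl fun s _ => ?_
  split_ifs <;> ring

lemma exists_compensatedSum_activeSet_eq {T : ℕ} (hw : ∀ j ∈ G, ∃ u < T, w ∈ halt j u) :
    ∃ τ : Fin K → ℕ, (∀ j ∈ G, w ∈ halt j (τ j)) ∧
      compensatedSum (activeSet hK μ G halt) l T w =
        ∑ j ∈ G, (l * noiseSum hK μ w j (τ j) - l ^ 2 / 2 * pullCount hK μ w j (τ j)) := by
  classical
  let τ : Fin K → ℕ := fun j => sInf {u | w ∈ halt j u}
  have hτ_mem : ∀ j ∈ G, w ∈ halt j (τ j) := fun j hj =>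
    Nat.sInf_mem (s := {u | w ∈ halt j u}) (let ⟨u, _, hu⟩ := hw j hj; ⟨u, hu⟩)
  have hτ_le : ∀ j ∈ G, τ j ≤ T := fun j hj =>
    let ⟨_, hu, hmem⟩ := hw j hj; ((Nat.sInf_le hmem).trans_lt hu).le
  have hactive : ∀ s, w ∈ activeSet hK μ G halt s ↔
      greedyArm hK μ w s ∈ G ∧ s < τ (greedyArm hK μ w s) := fun s =>
    ⟨fun ⟨hG, hns⟩ => ⟨hG, not_le.1 fun hle => hns _ hle (hτ_mem _ hG)⟩,
      fun ⟨hG, hlt⟩ => ⟨hG, fun _ hu => Nat.notMem_of_lt_sInf (hu.trans_lt hlt)⟩⟩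
  refine ⟨τ, hτ_mem, ?_⟩
  calc compensatedSum (activeSet hK μ G halt) l T w
      = ∑ s ∈ range T, ∑ j ∈ G, if greedyArm hK μ w s = j then
          (if s < τ j then l * w s - l ^ 2 / 2 else 0) else 0 := by
        refine sum_congr rfl fun s _ => ?_
        rw [sum_ite_eq, Set.indicator_apply]
        simp only [hactive, ite_and]
    _ = ∑ j ∈ G, ∑ s ∈ range (τ j),
          if greedyArm hK μ w s = j then l * w s - l ^ 2 / 2 else 0 := by
        rw [sum_comm]
        refine sum_congr rfl fun j hj => ?_
        rw [← sum_range_add_sum_Ico _ (hτ_le j hj), add_eq_left.2 (sum_eq_zero fun s hs => by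
          simp [not_lt.2 (mem_Ico.1 hs).1])]
        exact sum_congr rfl fun s hs => by simp [mem_range.1 hs]
    _ = _ := sum_congr rfl fun j _ => sum_range_ite_greedyArm_eq j (τ j)

end StoppedSums

section Events

variable {K : ℕ} (hK : 0 < K) (μ : Fin K → ℝ)

def dropSet (ε : ℝ) (j : Fin K) (u : ℕ) : Set (ℕ → ℝ) :=
  {w | noiseSum hK μ w j u < -(pullCount hK μ w j u * ε)}

def hitSet (δ : ℝ) (n : ℕ) (k : Fin K) (u : ℕ) : Set (ℕ → ℝ) :=
  {w | pullCount hK μ w k u = n ∧ n * δ ≤ noiseSum hK μ w k u}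

noncomputable def optimalArms (ε : ℝ) : Finset (Fin K) :=
  {k | muStar hK μ - μ k ≤ ε}

def allDropBefore (ε : ℝ) (T : ℕ) : Set (ℕ → ℝ) :=
  {w | ∀ j ∈ optimalArms hK μ ε, ∃ u < T, w ∈ dropSet hK μ ε j u}

def hitBefore (δ : ℝ) (n : ℕ) (k : Fin K) (T : ℕ) : Set (ℕ → ℝ) :=
  {w | ∃ u < T, w ∈ hitSet hK μ δ n k u}

variable {hK μ}

lemma measurableSet_dropSet (ε : ℝ) (j : Fin K) (u : ℕ) :
    MeasurableSet (dropSet hK μ ε j u) :=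
  measurableSet_lt (by fun_prop) (by fun_prop)

lemma measurableSet_hitSet (δ : ℝ) (n : ℕ) (k : Fin K) (u : ℕ) :
    MeasurableSet (hitSet hK μ δ n k u) :=
  measurableSet_setOfPred.2 (by fun_prop)

lemma measurableSet_allDropBefore (ε : ℝ) (T : ℕ) : MeasurableSet (allDropBefore hK μ ε T) :=
  measurableSet_setOfPred.2 (by fun_prop (disch := exact measurableSet_dropSet _ _ _))

lemma measurableSet_hitBefore (δ : ℝ) (n : ℕ) (k : Fin K) (T : ℕ) :
    MeasurableSet (hitBefore hK μ δ n k T) :=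
  measurableSet_setOfPred.2 (by fun_prop (disch := exact measurableSet_hitSet _ _ _ _))

lemma dependsOn_dropSet (ε : ℝ) (j : Fin K) (u : ℕ) :
    DependsOn (· ∈ dropSet hK μ ε j u) (Set.Iio u) := fun _ _ hw => by
  simp only [dropSet, Set.mem_ofPred_eq, dependsOn_pullCount j u hw, dependsOn_noiseSum j u hw]

lemma dependsOn_hitSet (δ : ℝ) (n : ℕ) (k : Fin K) (u : ℕ) :
    DependsOn (· ∈ hitSet hK μ δ n k u) (Set.Iio u) := fun _ _ hw => by
  simp only [hitSet, Set.mem_ofPred_eq, dependsOn_pullCount k u hw, dependsOn_noiseSum k u hw]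

end Events

section Deviations

variable {K : ℕ} {hK : 0 < K} {μ : Fin K → ℝ} {ε δ : ℝ} {T : ℕ} {w : ℕ → ℝ}

lemma le_compensatedSum_of_mem_allDropBefore (hε : 0 ≤ ε)
    (hw : w ∈ allDropBefore hK μ ε T) :
    nOpt hK μ ε * (ε ^ 2 / 2) ≤
      compensatedSum (activeSet hK μ (optimalArms hK μ ε) (dropSet hK μ ε)) (-ε) T w := by
  obtain ⟨τ, hτ, heq⟩ := exists_compensatedSum_activeSet_eq (l := -ε) hw
  rw [heq, nOpt, ← optimalArms, ← nsmul_eq_mul, ← sum_const]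
  refine sum_le_sum fun j hj => ?_
  have hdrop : noiseSum hK μ w j (τ j) < -(pullCount hK μ w j (τ j) * ε) := hτ j hj
  have hN : (1 : ℝ) ≤ pullCount hK μ w j (τ j) := by
    refine Nat.one_le_cast.2 (Nat.pos_of_ne_zero fun h0 => ?_)
    rw [noiseSum_eq_zero_of_pullCount_eq_zero h0, h0] at hdrop
    simp at hdrop
  nlinarith

lemma le_compensatedSum_of_mem_hitBefore (hδ : 0 ≤ δ) {n : ℕ} {k : Fin K}
    (hw : w ∈ hitBefore hK μ δ n k T) :
    n * (δ ^ 2 / 2) ≤ compensatedSum (activeSet hK μ {k} (hitSet hK μ δ n)) δ T w := by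
  obtain ⟨τ, hτ, heq⟩ :=
    exists_compensatedSum_activeSet_eq (l := δ) (G := {k}) (halt := hitSet hK μ δ n) (T := T)
      (by simpa [hitBefore] using hw)
  obtain ⟨hN, hS⟩ := hτ k (mem_singleton_self k)
  rw [heq, sum_singleton, hN]
  nlinarith [mul_le_mul_of_nonneg_left hS hδ]

variable {Ω : Type*} [MeasurableSpace Ω] {P : Measure Ω} [IsProbabilityMeasure P]
  {η : ℕ → Ω → ℝ}

theorem measureReal_allDropBefore_le (hmeas : ∀ t, Measurable (η t)) (hindep : iIndepFun η P)
    (hint : ∀ t (l : ℝ), Integrable (fun ω => exp (l * η t ω)) P)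
    (hsubg : ∀ t (l : ℝ), ∫ ω, exp (l * η t ω) ∂P ≤ exp (l ^ 2 / 2)) (hε : 0 ≤ ε)
    (T : ℕ) :
    P.real ((fun ω s => η s ω) ⁻¹' allDropBefore hK μ ε T) ≤
      exp (-(nOpt hK μ ε : ℝ) * ε ^ 2 / 2) := by
  refine (measureReal_le_exp_neg_of_le_compensatedSum (E := allDropBefore hK μ ε T) hmeas
    hindep (measurableSet_activeSet (measurableSet_dropSet ε))
    (dependsOn_activeSet (dependsOn_dropSet ε))
    (fun t => hint t (-ε)) (fun t => hsubg t (-ε))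
    fun w hw => le_compensatedSum_of_mem_allDropBefore hε hw).trans_eq ?_
  ring_nf

theorem measureReal_hitBefore_le (hmeas : ∀ t, Measurable (η t)) (hindep : iIndepFun η P)
    (hint : ∀ t (l : ℝ), Integrable (fun ω => exp (l * η t ω)) P)
    (hsubg : ∀ t (l : ℝ), ∫ ω, exp (l * η t ω) ∂P ≤ exp (l ^ 2 / 2)) (hδ : 0 ≤ δ)
    (n : ℕ) (k : Fin K) (T : ℕ) :
    P.real ((fun ω s => η s ω) ⁻¹' hitBefore hK μ δ n k T) ≤ exp (-(δ ^ 2 / 2)) ^ n := by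
  refine (measureReal_le_exp_neg_of_le_compensatedSum (E := hitBefore hK μ δ n k T) hmeas
    hindep (measurableSet_activeSet (measurableSet_hitSet δ n))
    (dependsOn_activeSet (dependsOn_hitSet δ n))
    (fun t => hint t δ) (fun t => hsubg t δ)
    fun w hw => le_compensatedSum_of_mem_hitBefore hδ hw).trans_eq ?_
  rw [← exp_nat_mul]
  ring_nf

end Deviations

section Regret

variable {K : ℕ} {hK : 0 < K} {μ : Fin K → ℝ} {ε : ℝ} {w : ℕ → ℝ}

lemma gap_nonneg (k : Fin K) : 0 ≤ muStar hK μ - μ k :=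
  sub_nonneg.2 (le_sup' μ (mem_univ k))

lemma gap_le_one (hμ : ∀ k, μ k ∈ Set.Icc (0 : ℝ) 1) (k : Fin K) :
    muStar hK μ - μ k ≤ 1 := by
  have : muStar hK μ ≤ 1 := sup'_le _ _ fun j _ => (hμ j).2
  linarith [(hμ k).1]

lemma mem_hitSet_of_notMem_dropSet {j : Fin K} (hj : j ∈ optimalArms hK μ ε) {t : ℕ}
    (ht : K ≤ t) (hnd : w ∉ dropSet hK μ ε j t) :
    w ∈ hitSet hK μ (muStar hK μ - μ (greedyArm hK μ w t) - 2 * ε)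
      (pullCount hK μ w (greedyArm hK μ w t) t) (greedyArm hK μ w t) t := by
  set k := greedyArm hK μ w t
  have hNj : (0 : ℝ) < pullCount hK μ w j t := Nat.cast_pos.2 (pullCount_pos ht j)
  have hNk : (0 : ℝ) < pullCount hK μ w k t := Nat.cast_pos.2 (pullCount_pos ht k)
  have hj_mean : -ε ≤ noiseSum hK μ w j t / pullCount hK μ w j t := by
    simp only [dropSet, Set.mem_ofPred_eq, not_lt] at hnd
    rw [le_div_iff₀ hNj]
    linarith
  have hj_gap : muStar hK μ - μ j ≤ ε := (mem_filter.1 hj).2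
  have hk_mean : muStar hK μ - μ k - 2 * ε ≤ noiseSum hK μ w k t / pullCount hK μ w k t := by
    linarith [le_greedyArm (hK := hK) (μ := μ) (w := w) ht j]
  exact ⟨rfl, by rwa [mul_comm, ← le_div_iff₀ hNk]⟩

lemma sum_gap_mul_pullCount_le (hμ : ∀ k, μ k ∈ Set.Icc (0 : ℝ) 1) (T : ℕ) :
    ∑ k, (muStar hK μ - μ k) * pullCount hK μ w k T ≤ T :=
  calc ∑ k, (muStar hK μ - μ k) * pullCount hK μ w k T
      ≤ ∑ k, (pullCount hK μ w k T : ℝ) :=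
        sum_le_sum fun k _ => mul_le_of_le_one_left (Nat.cast_nonneg _) (gap_le_one hμ k)
    _ = T := sum_pullCount T

lemma sum_gap_mul_pullCount_le_of_notMem_allDropBefore (hε : 0 ≤ ε) {T : ℕ}
    (hdrop : w ∉ allDropBefore hK μ ε T) :
    ∑ k, (muStar hK μ - μ k) * pullCount hK μ w k T ≤
      3 * ε * T + ∑ k, (muStar hK μ - μ k) +
        ∑ k with 3 * ε < muStar hK μ - μ k, (muStar hK μ - μ k) *
          ∑ n ∈ Ico 1 T,
            (hitBefore hK μ (muStar hK μ - μ k - 2 * ε) n k T).indicator 1 w := by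
  obtain ⟨j, hj, hnd⟩ :
      ∃ j ∈ optimalArms hK μ ε, ∀ u < T, w ∉ dropSet hK μ ε j u := by
    simpa [allDropBefore] using hdrop
  have hpull : ∀ k, (pullCount hK μ w k T : ℝ) ≤ 1 +
      ∑ n ∈ Ico 1 T, (hitBefore hK μ (muStar hK μ - μ k - 2 * ε) n k T).indicator 1 w :=
    fun k => pullCount_le_one_add_sum_indicator k T _ fun t ht hKt hk => by
      subst hk
      exact ⟨t, ht, mem_hitSet_of_notMem_dropSet hj hKt (hnd t ht)⟩
  have hgood : ∑ k with ¬3 * ε < muStar hK μ - μ k,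
      (muStar hK μ - μ k) * pullCount hK μ w k T ≤ 3 * ε * T :=
    calc _ ≤ ∑ k with ¬3 * ε < muStar hK μ - μ k, 3 * ε * pullCount hK μ w k T :=
          sum_le_sum fun k hk => mul_le_mul_of_nonneg_right (not_lt.1 (mem_filter.1 hk).2)
            (Nat.cast_nonneg _)
      _ ≤ ∑ k, 3 * ε * pullCount hK μ w k T :=
          sum_le_sum_of_subset_of_nonneg (filter_subset _ _) fun k _ _ => by positivity
      _ = 3 * ε * T := by rw [← mul_sum, sum_pullCount]
  have hbad : ∑ k with 3 * ε < muStar hK μ - μ k,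
      (muStar hK μ - μ k) * pullCount hK μ w k T ≤
      ∑ k with 3 * ε < muStar hK μ - μ k, ((muStar hK μ - μ k) + (muStar hK μ - μ k) *
        ∑ n ∈ Ico 1 T, (hitBefore hK μ (muStar hK μ - μ k - 2 * ε) n k T).indicator 1 w) :=
    sum_le_sum fun k _ => by nlinarith [hpull k, gap_nonneg (hK := hK) (μ := μ) k]
  have hfirst : ∑ k with 3 * ε < muStar hK μ - μ k, (muStar hK μ - μ k) ≤
      ∑ k, (muStar hK μ - μ k) :=
    sum_le_sum_of_subset_of_nonneg (filter_subset _ _) fun k _ _ => gap_nonneg k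
  rw [← sum_filter_add_sum_filter_not univ (fun k => 3 * ε < muStar hK μ - μ k)]
  rw [sum_add_distrib] at hbad
  linarith

theorem sum_gap_greedyArm_le (hμ : ∀ k, μ k ∈ Set.Icc (0 : ℝ) 1) (hε : 0 ≤ ε)
    (T : ℕ) :
    ∑ t ∈ range T, (muStar hK μ - μ (greedyArm hK μ w t)) ≤
      T * (allDropBefore hK μ ε T).indicator 1 w + 3 * ε * T + ∑ k, (muStar hK μ - μ k) +
        ∑ k with 3 * ε < muStar hK μ - μ k, (muStar hK μ - μ k) *
          ∑ n ∈ Ico 1 T,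
            (hitBefore hK μ (muStar hK μ - μ k - 2 * ε) n k T).indicator 1 w := by
  have hgaps : 0 ≤ ∑ k, (muStar hK μ - μ k) := sum_nonneg fun k _ => gap_nonneg k
  have hdev : 0 ≤ ∑ k with 3 * ε < muStar hK μ - μ k, (muStar hK μ - μ k) *
      ∑ n ∈ Ico 1 T, (hitBefore hK μ (muStar hK μ - μ k - 2 * ε) n k T).indicator 1 w :=
    sum_nonneg fun k _ => mul_nonneg (gap_nonneg k)
      (sum_nonneg fun n _ => Set.indicator_nonneg (fun _ _ => zero_le_one) w)
  rw [sum_comp_greedyArm (fun k => muStar hK μ - μ k)]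
  by_cases hdrop : w ∈ allDropBefore hK μ ε T
  · rw [Set.indicator_of_mem hdrop, Pi.one_apply, mul_one]
    nlinarith [sum_gap_mul_pullCount_le (hK := hK) (w := w) hμ T]
  · rw [Set.indicator_of_notMem hdrop, mul_zero, zero_add]
    exact sum_gap_mul_pullCount_le_of_notMem_allDropBefore hε hdrop

end Regret

section Expectation

variable {Ω : Type*} [MeasurableSpace Ω] {P : Measure Ω} {η : ℕ → Ω → ℝ}
  {K : ℕ} {hK : 0 < K} {μ : Fin K → ℝ}

lemma integrable_comp_greedyArm [IsProbabilityMeasure P] (hmeas : ∀ t, Measurable (η t))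
    (t : ℕ) :
    Integrable (fun ω => μ (greedyArm hK μ (fun s => η s ω) t)) P := by
  refine Integrable.of_bound (C := ∑ k, |μ k|) ?_ (ae_of_all _ fun ω => ?_)
  · exact ((measurable_of_countable μ).comp
      ((measurable_greedyArm t).comp (measurable_pi_lambda _ hmeas))).aestronglyMeasurable
  · exact single_le_sum (fun k _ => abs_nonneg (μ k)) (mem_univ _)

lemma greedyRegret_eq_integral [IsProbabilityMeasure P] (hmeas : ∀ t, Measurable (η t))
    (T : ℕ) :
    greedyRegret P hK μ η T =
      ∫ ω, ∑ t ∈ range T,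
        (muStar hK μ - μ (greedyArm hK μ (fun s => η s ω) t)) ∂P := by
  simp_rw [sum_sub_distrib]
  rw [integral_sub (integrable_const _) (integrable_finsetSum _ fun t _ =>
    integrable_comp_greedyArm hmeas t)]
  simp [greedyRegret]

lemma integrable_indicator_one_comp [IsProbabilityMeasure P] (hmeas : ∀ t, Measurable (η t))
    {E : Set (ℕ → ℝ)}
    (hE : MeasurableSet E) :
    Integrable (fun ω => E.indicator (1 : (ℕ → ℝ) → ℝ) fun s => η s ω) P :=
  (integrable_const 1).indicator (measurable_pi_lambda _ hmeas hE)

lemma integral_indicator_one_comp (hmeas : ∀ t, Measurable (η t)) {E : Set (ℕ → ℝ)}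
    (hE : MeasurableSet E) :
    ∫ ω, E.indicator (1 : (ℕ → ℝ) → ℝ) (fun s => η s ω) ∂P =
      P.real ((fun ω s => η s ω) ⁻¹' E) :=
  integral_indicator_one (measurable_pi_lambda _ hmeas hE)

theorem greedyRegret_le [IsProbabilityMeasure P] (hμ : ∀ k, μ k ∈ Set.Icc (0 : ℝ) 1)
    (hmeas : ∀ t, Measurable (η t)) {ε : ℝ} (hε : 0 ≤ ε) (T : ℕ) :
    greedyRegret P hK μ η T ≤
      T * P.real ((fun ω s => η s ω) ⁻¹' allDropBefore hK μ ε T) + 3 * ε * T +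
        ∑ k, (muStar hK μ - μ k) +
          ∑ k with 3 * ε < muStar hK μ - μ k, (muStar hK μ - μ k) * ∑ n ∈ Ico 1 T,
            P.real ((fun ω s => η s ω) ⁻¹'
              hitBefore hK μ (muStar hK μ - μ k - 2 * ε) n k T) := by
  have h₁ : Integrable
      (fun ω => (T : ℝ) * (allDropBefore hK μ ε T).indicator 1 fun s => η s ω) P :=
    (integrable_indicator_one_comp hmeas (measurableSet_allDropBefore ε T)).const_mul _
  have h₂ : Integrable (fun ω =>
      (T : ℝ) * (allDropBefore hK μ ε T).indicator 1 (fun s => η s ω) + 3 * ε * T) P :=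
    h₁.add (integrable_const _)
  have h₃ : Integrable (fun ω => (T : ℝ) * (allDropBefore hK μ ε T).indicator 1
      (fun s => η s ω) + 3 * ε * T + ∑ k, (muStar hK μ - μ k)) P :=
    h₂.add (integrable_const _)
  have hdev : ∀ k, Integrable (fun ω => (muStar hK μ - μ k) * ∑ n ∈ Ico 1 T,
      (hitBefore hK μ (muStar hK μ - μ k - 2 * ε) n k T).indicator 1 fun s => η s ω) P :=
    fun k => (integrable_finsetSum _ fun n _ =>
      integrable_indicator_one_comp hmeas (measurableSet_hitBefore _ n k T)).const_mul _
  have h₄ := integrable_finsetSum {k | 3 * ε < muStar hK μ - μ k} fun k _ => hdev k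
  rw [greedyRegret_eq_integral hmeas]
  refine (integral_mono_of_nonneg (ae_of_all _ fun ω => sum_nonneg fun t _ => gap_nonneg _)
    ?_ (ae_of_all _ fun ω => sum_gap_greedyArm_le hμ hε T)).trans_eq ?_
  · exact h₃.add h₄
  rw [integral_add h₃ h₄, integral_add h₂ (integrable_const _),
    integral_add h₁ (integrable_const _), integral_const_mul,
    integral_indicator_one_comp hmeas (measurableSet_allDropBefore ε T),
    integral_finsetSum _ fun k _ => hdev k]
  simp only [integral_const_mul, integral_finsetSum _ fun n _ =>
    integrable_indicator_one_comp hmeas (measurableSet_hitBefore _ n _ T),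
    integral_indicator_one_comp hmeas (measurableSet_hitBefore _ _ _ _)]
  simp

end Expectation

theorem greedy_generic_bound_general
    {Ω : Type*} [MeasurableSpace Ω] (P : Measure Ω) [IsProbabilityMeasure P]
    {K : ℕ} (hK : 0 < K) (T : ℕ)
    (μ : Fin K → ℝ) (hμ : ∀ k, μ k ∈ Set.Icc (0 : ℝ) 1)
    (η : ℕ → Ω → ℝ) (hmeas : ∀ t, Measurable (η t))
    (hindep : iIndepFun η P)
    (hint : ∀ t (l : ℝ), Integrable (fun ω => Real.exp (l * η t ω)) P)
    (hsubg : ∀ t (l : ℝ), ∫ ω, Real.exp (l * η t ω) ∂P ≤ Real.exp (l ^ 2 / 2))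
    (ε : ℝ) (hε : 0 < ε) :
    greedyRegret P hK μ η T ≤
      (T : ℝ) * Real.exp (-(nOpt hK μ ε : ℝ) * ε ^ 2 / 2) + 3 * ε * T + 6 * K / ε
        + ∑ k, (muStar hK μ - μ k) := by
  have hdrop := measureReal_allDropBefore_le (hK := hK) (μ := μ) hmeas hindep hint hsubg hε.le T
  have hdev : ∑ k with 3 * ε < muStar hK μ - μ k, (muStar hK μ - μ k) *
      ∑ n ∈ Ico 1 T, P.real ((fun ω s => η s ω) ⁻¹'
        hitBefore hK μ (muStar hK μ - μ k - 2 * ε) n k T) ≤ 6 * K / ε := by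
    calc _ ≤ ∑ k with 3 * ε < muStar hK μ - μ k, 6 / ε := sum_le_sum fun k hk => by
          have hbad := (mem_filter.1 hk).2
          refine (mul_le_mul_of_nonneg_left (sum_le_sum fun n _ => ?_) (gap_nonneg k)).trans
            (gap_mul_sum_exp_neg_pow_le hε hbad T)
          exact measureReal_hitBefore_le hmeas hindep hint hsubg (by linarith) n k T
      _ ≤ ∑ _k : Fin K, 6 / ε :=
          sum_le_sum_of_subset_of_nonneg (filter_subset _ _) fun _ _ _ => by positivity
      _ = 6 * K / ε := by
          simp only [sum_const, card_univ, Fintype.card_fin, nsmul_eq_mul]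
          ring
  have hregret := greedyRegret_le (P := P) (hK := hK) hμ hmeas hε.le T
  linarith [mul_le_mul_of_nonneg_left hdrop (Nat.cast_nonneg T)]

/-- **Theorem 1 (generic bound on Greedy).** For the Greedy algorithm run on `K` arms with
1-subgaussian rewards and mean rewards in `[0,1]`, for every `ε > 0` and horizon `T`,
`R_T ≤ T·exp(-N_ε ε²/2) + 3εT + 6K/ε + ∑_k Δ_k`. -/
theorem greedy_generic_bound
    {Ω : Type*} [MeasurableSpace Ω] (P : Measure Ω) [IsProbabilityMeasure P]
    {K : ℕ} (hK : 0 < K) (T : ℕ)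
    (μ : Fin K → ℝ) (hμ : ∀ k, μ k ∈ Set.Icc (0 : ℝ) 1)
    (η : ℕ → Ω → ℝ) (hmeas : ∀ t, Measurable (η t))
    (hindep : iIndepFun η P)
    (hident : ∀ s t, IdentDistrib (η s) (η t) P P)
    (hint : ∀ t (l : ℝ), Integrable (fun ω => Real.exp (l * η t ω)) P)
    (hsubg : ∀ t (l : ℝ), ∫ ω, Real.exp (l * η t ω) ∂P ≤ Real.exp (l ^ 2 / 2))
    (ε : ℝ) (hε : 0 < ε) :
    greedyRegret P hK μ η T ≤
      (T : ℝ) * Real.exp (-(nOpt hK μ ε : ℝ) * ε ^ 2 / 2) + 3 * ε * T + 6 * K / ε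
        + ∑ k, (muStar hK μ - μ k) :=
  greedy_generic_bound_general P hK T μ hμ η hmeas hindep hint hsubg ε hε
end

section
/- Consider K arms with mean rewards μ_1,…,μ_K ∈ [0,1]; for each arm k let M_{k,t} = μ_k + (1/t)·Σ_{s=1}^t η_{k,s} denote the empirical mean of its first t rewards, where {η_{k,s}} are i.i.d. 1-subgaussian random variables, independent across arms. Let μ* = max_k μ_k, fix ε > 0, and let N_ε be the number of arms k with μ* − μ_k ≤ ε. Then the probability that every ε-optimal arm k admits some t ≥ 1 with M_{k,t} < μ_k − ε is at most exp(−N_ε·ε²/2). -/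
/-!
For a fixed arm, `M_n = ∏_{s ≤ n} exp (-ε η_s) / E[exp (-ε η_s)]` is a nonnegative martingale of
mean one. Since the mgf is at most `exp (ε² / 2)`, an average `(1/t) ∑_{s<t} η_s < -ε` forces
`M_{t-1} ≥ exp (t ε² / 2) ≥ exp (ε² / 2)`, so Ville's maximal inequality bounds the probability that
this ever happens by `exp (-ε² / 2)`. The arms are independent, so the bounds multiply over the
`N_ε` arms that are `ε`-optimal.
-/

open MeasureTheory ProbabilityTheory Finset
open scoped NNReal ENNReal

namespace MeasureTheory
variable {Ω : Type*} [MeasurableSpace Ω] {μ : Measure Ω}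

theorem Martingale.mul_measure_exists_ge_le [IsFiniteMeasure μ] {f : ℕ → Ω → ℝ}
    {ℱ : Filtration ℕ ‹MeasurableSpace Ω›} (hf : Martingale f ℱ μ) (hnonneg : 0 ≤ f) (c : ℝ≥0) :
    c * μ {ω | ∃ n, (c : ℝ) ≤ f n ω} ≤ ENNReal.ofReal (μ[f 0]) := by
  rw [Set.ofPred_exists, measure_iUnion_eq_iSup_accumulate, ENNReal.mul_iSup]
  refine iSup_le fun n => ?_
  have hsub : Set.accumulate (fun k => {ω | (c : ℝ) ≤ f k ω}) n ⊆
      {ω | (c : ℝ) ≤ (range (n + 1)).sup' nonempty_range_add_one fun k => f k ω} := by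
    intro ω hω
    obtain ⟨k, hk, hck⟩ := Set.mem_accumulate.1 hω
    exact hck.trans (le_sup' (fun k => f k ω) (mem_range_succ_iff.2 hk))
  calc c * μ (Set.accumulate (fun k => {ω | (c : ℝ) ≤ f k ω}) n)
      ≤ c * μ {ω | (c : ℝ) ≤ (range (n + 1)).sup' nonempty_range_add_one fun k => f k ω} := by
        gcongr
    _ ≤ ENNReal.ofReal (∫ ω in {ω | (c : ℝ) ≤ (range (n + 1)).sup' nonempty_range_add_one
          fun k => f k ω}, f n ω ∂μ) := maximal_ineq hf.submartingale hnonneg n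
    _ ≤ ENNReal.ofReal (μ[f n]) :=
        ENNReal.ofReal_le_ofReal (setIntegral_le_integral (hf.integrable n)
          (Filter.Eventually.of_forall (hnonneg n)))
    _ = ENNReal.ofReal (μ[f 0]) := by
        rw [← setIntegral_univ, ← hf.setIntegral_eq (Nat.zero_le n) MeasurableSet.univ,
          setIntegral_univ]
end MeasureTheory

namespace ProbabilityTheory
variable {Ω : Type*} [MeasurableSpace Ω] {μ : Measure Ω}

lemma iIndepFun.integrable_prod_range {Y : ℕ → Ω → ℝ} (hY : iIndepFun Y μ)
    (hmeas : ∀ s, Measurable (Y s)) (hint : ∀ s, Integrable (Y s) μ) (n : ℕ) :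
    Integrable (∏ s ∈ range n, Y s) μ := by
  induction n with
  | zero =>
    have := hY.isProbabilityMeasure
    rw [range_zero, prod_empty]
    exact integrable_const (1 : ℝ)
  | succ n ih =>
    rw [prod_range_succ]
    exact (hY.indepFun_prod_range_succ hmeas n).integrable_mul ih (hint n)

lemma iIndepFun.martingale_prod_range_succ {Y : ℕ → Ω → ℝ} (hY : iIndepFun Y μ)
    (hmeas : ∀ s, StronglyMeasurable (Y s)) (hint : ∀ s, Integrable (Y s) μ)
    (hone : ∀ s, μ[Y s] = 1) :
    Martingale (fun n => ∏ s ∈ range (n + 1), Y s) (Filtration.natural Y hmeas) μ := by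
  have := hY.isProbabilityMeasure
  have hprod := hY.integrable_prod_range (fun s => (hmeas s).measurable) hint
  have hadapted : StronglyAdapted (Filtration.natural Y hmeas) fun n => ∏ s ∈ range (n + 1), Y s :=
    fun n => Finset.stronglyMeasurable_prod _ fun s hs =>
      (Filtration.stronglyAdapted_natural hmeas s).mono
        ((Filtration.natural Y hmeas).mono (Nat.lt_succ_iff.1 (mem_range.1 hs)))
  refine martingale_nat hadapted (fun n => hprod _) fun n => ?_
  have hY_next : μ[Y (n + 1) | Filtration.natural Y hmeas n] =ᵐ[μ] fun _ => 1 := by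
    simpa [hone] using hY.condExp_natural_ae_eq_of_lt hmeas (Nat.lt_succ_self n)
  rw [prod_range_succ _ (n + 1)]
  refine ((condExp_mul_of_stronglyMeasurable_left (hadapted n) ?_ (hint _)).trans ?_).symm
  · simpa only [prod_range_succ] using hprod (n + 2)
  · filter_upwards [hY_next] with ω hω
    simp [hω]

open Real in
lemma exp_sq_half_le_prod_of_avg_lt_neg {x y : ℕ → ℝ} {ε : ℝ} (hε : 0 ≤ ε)
    (hy : ∀ s, exp (-ε * x s - ε ^ 2 / 2) ≤ y s) {t : ℕ} (ht : 1 ≤ t)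
    (havg : 1 / (t : ℝ) * ∑ s ∈ range t, x s < -ε) :
    exp (ε ^ 2 / 2) ≤ ∏ s ∈ range t, y s := by
  have ht' : (1 : ℝ) ≤ t := by exact_mod_cast ht
  have hsum : ∑ s ∈ range t, x s < -(t * ε) := by
    rw [one_div, inv_mul_lt_iff₀ (by positivity)] at havg
    linarith
  calc exp (ε ^ 2 / 2) ≤ exp (∑ s ∈ range t, (-ε * x s - ε ^ 2 / 2)) := by
        rw [sum_sub_distrib, ← mul_sum, sum_const, card_range, nsmul_eq_mul]
        gcongr
        nlinarith
    _ = ∏ s ∈ range t, exp (-ε * x s - ε ^ 2 / 2) := exp_sum _ _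
    _ ≤ ∏ s ∈ range t, y s := prod_le_prod (fun _ _ => exp_nonneg _) fun s _ => hy s

open Real in
lemma iIndepFun.measure_exists_avg_lt_neg_le {X : ℕ → Ω → ℝ} (hX : iIndepFun X μ)
    (hmeas : ∀ s, Measurable (X s)) {ε : ℝ} (hε : 0 ≤ ε)
    (hint : ∀ s, Integrable (fun ω => exp (-ε * X s ω)) μ)
    (hmgf : ∀ s, mgf (X s) μ (-ε) ≤ exp (ε ^ 2 / 2)) :
    μ {ω | ∃ t : ℕ, 1 ≤ t ∧ 1 / (t : ℝ) * ∑ s ∈ range t, X s ω < -ε}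
      ≤ ENNReal.ofReal (exp (-ε ^ 2 / 2)) := by
  have := hX.isProbabilityMeasure
  set Y : ℕ → Ω → ℝ := fun s ω => exp (-ε * X s ω) / mgf (X s) μ (-ε)
  have hY : iIndepFun Y μ :=
    hX.comp (fun s x => exp (-ε * x) / mgf (X s) μ (-ε)) fun s => by fun_prop
  have hYone (s : ℕ) : μ[Y s] = 1 := by
    rw [integral_div]
    exact div_self (mgf_pos (hint s)).ne'
  have hYlower (s : ℕ) (ω : Ω) : exp (-ε * X s ω - ε ^ 2 / 2) ≤ Y s ω := by
    rw [exp_sub]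
    exact div_le_div_of_nonneg_left (exp_nonneg _) (mgf_pos (hint s)) (hmgf s)
  have hM := hY.martingale_prod_range_succ (fun s => by fun_prop)
    (fun s => (hint s).div_const _) hYone
  have hMnonneg : (0 : ℕ → Ω → ℝ) ≤ fun n => ∏ s ∈ range (n + 1), Y s := fun n ω => by
    simp only [Pi.zero_apply, prod_apply]
    exact prod_nonneg fun s _ => (exp_nonneg _).trans (hYlower s ω)
  have hville := hM.mul_measure_exists_ge_le hMnonneg (Real.toNNReal (exp (ε ^ 2 / 2)))
  have hM0 : μ[∏ s ∈ range (0 + 1), Y s] = 1 := by simp [hYone]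
  rw [hM0, ENNReal.ofReal_one, mul_comm] at hville
  have hsub : {ω | ∃ t : ℕ, 1 ≤ t ∧ 1 / (t : ℝ) * ∑ s ∈ range t, X s ω < -ε} ⊆
      {ω | ∃ n, (Real.toNNReal (exp (ε ^ 2 / 2)) : ℝ) ≤ (∏ s ∈ range (n + 1), Y s) ω} := by
    rintro ω ⟨t, ht, havg⟩
    obtain ⟨n, rfl⟩ := Nat.exists_eq_add_of_le' ht
    rw [Set.mem_ofPred_eq, Real.coe_toNNReal _ (exp_nonneg _)]
    exact ⟨n, by simpa only [prod_apply] using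
      exp_sq_half_le_prod_of_avg_lt_neg hε (hYlower · ω) ht havg⟩
  calc μ {ω | ∃ t : ℕ, 1 ≤ t ∧ 1 / (t : ℝ) * ∑ s ∈ range t, X s ω < -ε}
      ≤ (ENNReal.ofReal (exp (ε ^ 2 / 2)))⁻¹ :=
        (measure_mono hsub).trans (ENNReal.le_inv_iff_mul_le.2 hville)
    _ = ENNReal.ofReal (exp (-ε ^ 2 / 2)) := by
        rw [← ENNReal.ofReal_inv_of_pos (exp_pos _), ← exp_neg, neg_div]

lemma iIndepFun.curry {ι κ 𝓧 : Type*} [MeasurableSpace 𝓧] {X : ι → κ → Ω → 𝓧}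
    (mX : ∀ i j, Measurable (X i j)) (h : iIndepFun (fun p : ι × κ => X p.1 p.2) μ) :
    iIndepFun (fun i ω => (X i · ω)) μ := by
  have := h.isProbabilityMeasure
  have hrow (i : ι) : μ.map (fun ω => (X i · ω)) = Measure.infinitePi (fun j => μ.map (X i j)) :=
    (iIndepFun_iff_map_fun_eq_infinitePi_map (mX i)).1
      (h.precomp (g := fun j => (i, j)) fun _ _ hj => (Prod.mk.inj hj).2)
  have hsigma := (iIndepFun_iff_map_fun_eq_infinitePi_map (fun p : (_ : ι) × κ => mX p.1 p.2)).1
    (h.precomp (g := fun p : (_ : ι) × κ => (p.1, p.2)) (Equiv.sigmaEquivProd ι κ).injective)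
  rw [iIndepFun_iff_map_fun_eq_infinitePi_map (fun i => by fun_prop)]
  simp_rw [hrow]
  have (i : ι) (j : κ) : IsProbabilityMeasure (μ.map (X i j)) :=
    Measure.isProbabilityMeasure_map (mX i j).aemeasurable
  rw [← Measure.infinitePi_map_piCurry (fun i j => μ.map (X i j)), ← hsigma,
    Measure.map_map (by fun_prop) (by fun_prop)]
  rfl

end ProbabilityTheory

theorem prob_all_eps_optimal_underestimated_general
    {Ω : Type*} [MeasurableSpace Ω] (P : Measure Ω)
    {K : ℕ} (μ : Fin K → ℝ) (μstar : ℝ)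
    (η : Fin K → ℕ → Ω → ℝ) (hmeas : ∀ k s, Measurable (η k s))
    (hindep : iIndepFun (fun p : Fin K × ℕ => η p.1 p.2) P)
    (hint : ∀ k s (l : ℝ), Integrable (fun ω => Real.exp (l * η k s ω)) P)
    (hsubg : ∀ k s (l : ℝ), ∫ ω, Real.exp (l * η k s ω) ∂P ≤ Real.exp (l ^ 2 / 2))
    (ε : ℝ) (hε : 0 < ε)
    (Nε : ℕ) (hNε : Nε = (Finset.univ.filter fun k => μstar - μ k ≤ ε).card) :
    P {ω | ∀ k : Fin K, μstar - μ k ≤ ε →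
        ∃ t : ℕ, 1 ≤ t ∧ μ k + (1 / (t : ℝ)) * ∑ s ∈ Finset.range t, η k s ω < μ k - ε}
      ≤ ENNReal.ofReal (Real.exp (-(Nε : ℝ) * ε ^ 2 / 2)) := by
  set F := Finset.univ.filter fun k => μstar - μ k ≤ ε
  set B : Set (ℕ → ℝ) := {x | ∃ t : ℕ, 1 ≤ t ∧ 1 / (t : ℝ) * ∑ s ∈ Finset.range t, x s < -ε}
  have hB : MeasurableSet B := by
    simp only [B, Set.ofPred_exists]
    measurability
  have hrow (k : Fin K) : iIndepFun (η k) P :=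
    hindep.precomp (g := fun s => (k, s)) (Prod.mk_right_injective k)
  calc P {ω | ∀ k : Fin K, μstar - μ k ≤ ε →
        ∃ t : ℕ, 1 ≤ t ∧ μ k + (1 / (t : ℝ)) * ∑ s ∈ Finset.range t, η k s ω < μ k - ε}
      ≤ P (⋂ k ∈ F, (fun ω => (η k · ω)) ⁻¹' B) := by
        refine measure_mono fun ω hω => Set.mem_iInter₂.2 fun k hk => ?_
        obtain ⟨t, ht, hlt⟩ := hω k (Finset.mem_filter.1 hk).2
        exact ⟨t, ht, by linarith⟩
    _ = ∏ k ∈ F, P ((fun ω => (η k · ω)) ⁻¹' B) :=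
        (hindep.curry hmeas).meas_biInter fun k _ => ⟨B, hB, rfl⟩
    _ ≤ ∏ _k ∈ F, ENNReal.ofReal (Real.exp (-ε ^ 2 / 2)) :=
        Finset.prod_le_prod' fun k _ => (hrow k).measure_exists_avg_lt_neg_le (hmeas k) hε.le
          (fun s => hint k s (-ε)) fun s => by rw [← neg_sq]; exact hsubg k s (-ε)
    _ = ENNReal.ofReal (Real.exp (-(Nε : ℝ) * ε ^ 2 / 2)) := by
        rw [Finset.prod_const, ← ENNReal.ofReal_pow (Real.exp_nonneg _), ← Real.exp_nat_mul, hNε]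
        ring_nf

/-- **Bound on the bad event.** Consider `K` arms with mean rewards `μ_k ∈ [0,1]` and, for each
arm `k`, empirical means `M_{k,t} = μ_k + (1/t)·∑_{s=1}^t η_{k,s}` where the `η_{k,s}` are
i.i.d. mean-zero 1-subgaussian, independent across arms. For `ε > 0`, the probability that
every `ε`-optimal arm `k` admits some `t ≥ 1` with `M_{k,t} < μ_k - ε` is at most
`exp(-N_ε·ε²/2)`, where `N_ε` is the number of `ε`-optimal arms. -/
theorem prob_all_eps_optimal_underestimated
    {Ω : Type*} [MeasurableSpace Ω] (P : Measure Ω) [IsProbabilityMeasure P]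
    {K : ℕ} (hK : 0 < K)
    (μ : Fin K → ℝ) (hμ : ∀ k, μ k ∈ Set.Icc (0 : ℝ) 1)
    (μstar : ℝ) (hμstar : μstar = Finset.univ.sup' ⟨⟨0, hK⟩, Finset.mem_univ _⟩ μ)
    (η : Fin K → ℕ → Ω → ℝ) (hmeas : ∀ k s, Measurable (η k s))
    (hindep : iIndepFun (fun p : Fin K × ℕ => η p.1 p.2) P)
    (hident : ∀ p q : Fin K × ℕ, IdentDistrib (η p.1 p.2) (η q.1 q.2) P P)
    (hmean : ∀ k s, ∫ ω, η k s ω ∂P = 0)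
    (hint : ∀ k s (l : ℝ), Integrable (fun ω => Real.exp (l * η k s ω)) P)
    (hsubg : ∀ k s (l : ℝ), ∫ ω, Real.exp (l * η k s ω) ∂P ≤ Real.exp (l ^ 2 / 2))
    (ε : ℝ) (hε : 0 < ε)
    (Nε : ℕ) (hNε : Nε = (Finset.univ.filter fun k => μstar - μ k ≤ ε).card) :
    P {ω | ∀ k : Fin K, μstar - μ k ≤ ε →
        ∃ t : ℕ, 1 ≤ t ∧ μ k + (1 / (t : ℝ)) * ∑ s ∈ Finset.range t, η k s ω < μ k - ε}
      ≤ ENNReal.ofReal (Real.exp (-(Nε : ℝ) * ε ^ 2 / 2)) :=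
  prob_all_eps_optimal_underestimated_general P μ μstar η hmeas hindep hint hsubg ε hε Nε hNε
end
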